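/- arXiv:1608.02327 — 3 statements merged into one kernel-verified Lean document; each statement's English description precedes it below -/
import Mathlib

section
/- In the example net of Fig. 1, the set of live markings is L_T = {M : M(p2)+M(p3) ≥ 1 and M(p1)+M(p3) is odd}. -/
/-- `Fires pre post M t M'`: marking `M` fires transition `t` yielding `M'`,
where `pre t p = W(p,t)` and `post t p = W(t,p)`. -/
def Fires {P T : Type*} (pre post : T → P → ℕ) (M : P → ℕ) (t : T) (M' : P → ℕ) : Prop :=
  (∀ p, pre t p ≤ M p) ∧ (∀ p, M' p = M p - pre t p + post t p)

/-- Firing a sequence of transitions. -/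
def FiresSeq {P T : Type*} (pre post : T → P → ℕ) : (P → ℕ) → List T → (P → ℕ) → Prop
  | M, [], M' => M' = M
  | M, t :: u, M'' => ∃ M', Fires pre post M t M' ∧ FiresSeq pre post M' u M''

/-- Reachability. -/
def Reach {P T : Type*} (pre post : T → P → ℕ) (M M' : P → ℕ) : Prop :=
  ∃ u, FiresSeq pre post M u M'

/-- `t` is enabled in `M`. -/
def Enabled {P T : Type*} (pre : T → P → ℕ) (M : P → ℕ) (t : T) : Prop :=
  ∀ p, pre t p ≤ M p

/-- `t` is dead in `M`: no reachable marking enables `t`. -/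
def Dead {P T : Type*} (pre post : T → P → ℕ) (M : P → ℕ) (t : T) : Prop :=
  ∀ M', Reach pre post M M' → ¬ Enabled pre M' t

/-- `t` is live in `M`: no reachable marking has `t` dead. -/
def Live {P T : Type*} (pre post : T → P → ℕ) (M : P → ℕ) (t : T) : Prop :=
  ∀ M', Reach pre post M M' → ¬ Dead pre post M' t

/-- The example net of Fig. 1: `examplePre t p = W(p_{p+1}, t_{t+1})`. -/
def examplePre : Fin 3 → Fin 3 → ℕ := ![![2, 0, 0], ![1, 1, 0], ![0, 0, 1]]

/-- The example net of Fig. 1: `examplePost t p = W(t_{t+1}, p_{p+1})`. -/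
def examplePost : Fin 3 → Fin 3 → ℕ := ![![0, 0, 0], ![2, 0, 1], ![1, 1, 0]]

section Aux

lemma firesSeq_append {P T : Type*} {pre post : T → P → ℕ} (u : List T) :
    ∀ {M M' M'' : P → ℕ} {v : List T}, FiresSeq pre post M u M' →
      FiresSeq pre post M' v M'' → FiresSeq pre post M (u ++ v) M'' := by
  induction u with
  | nil =>
      intro M M' M'' v h1 h2
      simp only [FiresSeq] at h1
      simpa [h1] using h2
  | cons t u ih =>
      intro M M' M'' v h1 h2
      obtain ⟨N, hf, hs⟩ := h1
      exact ⟨N, hf, ih hs h2⟩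

lemma reach_refl {P T : Type*} (pre post : T → P → ℕ) (M : P → ℕ) :
    Reach pre post M M := ⟨[], rfl⟩

lemma reach_trans {P T : Type*} {pre post : T → P → ℕ} {M M' M'' : P → ℕ}
    (h1 : Reach pre post M M') (h2 : Reach pre post M' M'') :
    Reach pre post M M'' := by
  obtain ⟨u, hu⟩ := h1
  obtain ⟨v, hv⟩ := h2
  exact ⟨u ++ v, firesSeq_append u hu hv⟩

lemma reach_single {P T : Type*} {pre post : T → P → ℕ} {M M' : P → ℕ} {t : T}
    (h : Fires pre post M t M') : Reach pre post M M' := ⟨[t], M', h, rfl⟩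

lemma reach_congr {P T : Type*} {pre post : T → P → ℕ} {M M' N : P → ℕ}
    (h : Reach pre post M M') (he : M' = N) : Reach pre post M N := he ▸ h

-- firing each transition of the example net
lemma fire_t1 {M : Fin 3 → ℕ} (h : 2 ≤ M 0) :
    Fires examplePre examplePost M 0 ![M 0 - 2, M 1, M 2] := by
  constructor <;> intro p <;> fin_cases p <;>
    simp [examplePre, examplePost] <;> omega

lemma fire_t2 {M : Fin 3 → ℕ} (h0 : 1 ≤ M 0) (h1 : 1 ≤ M 1) :
    Fires examplePre examplePost M 1 ![M 0 + 1, M 1 - 1, M 2 + 1] := by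
  constructor <;> intro p <;> fin_cases p <;>
    simp [examplePre, examplePost] <;> omega

lemma fire_t3 {M : Fin 3 → ℕ} (h : 1 ≤ M 2) :
    Fires examplePre examplePost M 2 ![M 0 + 1, M 1 + 1, M 2 - 1] := by
  constructor <;> intro p <;> fin_cases p <;>
    simp [examplePre, examplePost] <;> omega

-- invariants
lemma fires_inv {M M' : Fin 3 → ℕ} {t : Fin 3}
    (h : Fires examplePre examplePost M t M') :
    M' 1 + M' 2 = M 1 + M 2 ∧ (M' 0 + M' 2) % 2 = (M 0 + M 2) % 2 := by
  obtain ⟨hle, heq⟩ := h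
  have e0 := heq 0; have e1 := heq 1; have e2 := heq 2
  have l0 := hle 0; have l1 := hle 1; have l2 := hle 2
  fin_cases t <;> simp [examplePre, examplePost] at e0 e1 e2 l0 l1 l2 <;> omega

lemma reach_inv {M M' : Fin 3 → ℕ}
    (h : Reach examplePre examplePost M M') :
    M' 1 + M' 2 = M 1 + M 2 ∧ (M' 0 + M' 2) % 2 = (M 0 + M 2) % 2 := by
  obtain ⟨u, hu⟩ := h
  induction u generalizing M with
  | nil => simp only [FiresSeq] at hu; subst hu; exact ⟨rfl, rfl⟩
  | cons t u ih =>
      obtain ⟨N, hf, hs⟩ := hu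
      have h1 := fires_inv hf
      have h2 := ih hs
      omega

-- drain p3 by firing t3 repeatedly
lemma drain_p3 : ∀ (k : ℕ) (M : Fin 3 → ℕ), M 2 = k →
    Reach examplePre examplePost M ![M 0 + k, M 1 + k, 0] := by
  intro k
  induction k with
  | zero =>
      intro M hM
      refine reach_congr (reach_refl _ _ M) ?_
      funext p; fin_cases p <;> simp <;> omega
  | succ k ih =>
      intro M hM
      have hf := fire_t3 (M := M) (by omega)
      have hr := ih ![M 0 + 1, M 1 + 1, M 2 - 1] (by simp; omega)
      refine reach_trans (reach_single hf) (reach_congr hr ?_)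
      funext p; fin_cases p <;> simp <;> omega

-- drain p1 by firing t1 repeatedly (when p1 is even)
lemma drain_p1 : ∀ (k : ℕ) (M : Fin 3 → ℕ), M 0 = 2 * k →
    Reach examplePre examplePost M ![0, M 1, M 2] := by
  intro k
  induction k with
  | zero =>
      intro M hM
      refine reach_congr (reach_refl _ _ M) ?_
      funext p; fin_cases p <;> simp <;> omega
  | succ k ih =>
      intro M hM
      have hf := fire_t1 (M := M) (by omega)
      have hr := ih ![M 0 - 2, M 1, M 2] (by simp; omega)
      refine reach_trans (reach_single hf) (reach_congr hr ?_)
      funext p; fin_cases p <;> simp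

-- a marking with p1 = 0 and p3 = 0 is totally dead
lemma dead_marking {b : ℕ} {M' : Fin 3 → ℕ}
    (h : Reach examplePre examplePost ![0, b, 0] M') : M' = ![0, b, 0] := by
  obtain ⟨u, hu⟩ := h
  cases u with
  | nil => exact hu
  | cons t v =>
      obtain ⟨N, ⟨hle, _⟩, _⟩ := hu
      exfalso
      fin_cases t
      · have := hle 0; simp [examplePre] at this
      · have := hle 0; simp [examplePre] at this
      · have := hle 2; simp [examplePre] at this

end Aux

/-- The set of live markings of the example net. -/
theorem example_liveSet :
    {M : Fin 3 → ℕ | ∀ t : Fin 3, Live examplePre examplePost M t} =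
      {M | 1 ≤ M 1 + M 2 ∧ Odd (M 0 + M 2)} := by
  ext M
  simp only [Set.mem_setOf_eq]
  constructor
  · intro hlive
    constructor
    · -- p2 + p3 ≥ 1
      by_contra h
      have hsum : M 1 + M 2 = 0 := by omega
      have : Dead examplePre examplePost M 1 := by
        intro M' hr he
        have hinv := reach_inv hr
        have := he 1
        simp [examplePre] at this
        omega
      exact hlive 1 M (reach_refl _ _ M) this
    · -- parity
      by_contra h
      have heven : (M 0 + M 2) % 2 = 0 := Nat.not_odd_iff.mp h
      -- drain p3 then p1, reaching a dead marking
      have h1 : Reach examplePre examplePost M ![M 0 + M 2, M 1 + M 2, 0] :=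
        drain_p3 (M 2) M rfl
      have h2 : Reach examplePre examplePost ![M 0 + M 2, M 1 + M 2, 0]
          ![0, M 1 + M 2, 0] := by
        have := drain_p1 ((M 0 + M 2) / 2) ![M 0 + M 2, M 1 + M 2, 0] (by simp; omega)
        refine reach_congr this ?_
        funext p; fin_cases p <;> simp
      have hD : Reach examplePre examplePost M ![0, M 1 + M 2, 0] :=
        reach_trans h1 h2
      have : Dead examplePre examplePost ![0, M 1 + M 2, 0] 0 := by
        intro M' hr he
        have := dead_marking hr
        subst this
        have := he 0
        simp [examplePre] at this
      exact hlive 0 _ hD this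
  · -- sufficiency
    rintro ⟨hsum, hodd⟩ t M' hr hdead
    have hinv := reach_inv hr
    have hodd' : (M' 0 + M' 2) % 2 = 1 := by
      have := Nat.odd_iff.mp hodd; omega
    have hsum' : 1 ≤ M' 1 + M' 2 := by omega
    -- drain p3 from M'
    set N : Fin 3 → ℕ := ![M' 0 + M' 2, M' 1 + M' 2, 0] with hN
    have hrN : Reach examplePre examplePost M' N := drain_p3 (M' 2) M' rfl
    have hN0 : N 0 = M' 0 + M' 2 := by simp [hN]
    have hN1 : N 1 = M' 1 + M' 2 := by simp [hN]
    have hN2 : N 2 = 0 := by simp [hN]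
    have hN0pos : 1 ≤ N 0 := by omega
    have hN1pos : 1 ≤ N 1 := by omega
    have hf2 := fire_t2 (M := N) hN0pos hN1pos
    set N' : Fin 3 → ℕ := ![N 0 + 1, N 1 - 1, N 2 + 1] with hN'
    have hrN' : Reach examplePre examplePost M' N' :=
      reach_trans hrN (reach_single hf2)
    fin_cases t
    · -- t1 enabled at N'
      refine hdead N' hrN' ?_
      intro p; fin_cases p <;> simp [examplePre, hN'] <;> omega
    · -- t2 enabled at N
      refine hdead N hrN ?_
      intro p; fin_cases p <;> simp [examplePre] <;> omega
    · -- t3 enabled at N'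
      refine hdead N' hrN' ?_
      intro p; fin_cases p <;> simp [examplePre, hN'] <;> omega
end

section
/- In the net of Fig. 3 restricted to the weak-computer gadget: starting from marking (x₁,0,1,0,1,x₆), a marking with all transitions dead is reachable if and only if x₆ ≤ 2^{x₁}; consequently, the marking (x₁,0,1,0,1,x₆) is live iff x₆ > 2^{x₁}, and hence the set of live markings of this net is not semilinear. -/
/-- A linear subset of `ℕ^d`. -/
def IsLinearSet' {d : ℕ} (L : Set (Fin d → ℕ)) : Prop :=
  ∃ (ρ : Fin d → ℕ) (k : ℕ) (π : Fin k → (Fin d → ℕ)),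
    L = {v | ∃ x : Fin k → ℕ, v = ρ + ∑ i, x i • π i}

/-- A semilinear subset of `ℕ^d`: a finite union of linear sets. -/
def IsSemilinearSet' {d : ℕ} (S : Set (Fin d → ℕ)) : Prop :=
  ∃ (m : ℕ) (L : Fin m → Set (Fin d → ℕ)), (∀ i, IsLinearSet' (L i)) ∧ S = ⋃ i, L i

namespace Fig3

/-- places: 0 = counter C, 1 = buffer U, 2 = control A, 3 = control B, 4 = value V, 5 = input D -/
def tpre : Fin 8 → Fin 6 → ℕ :=
  ![![0,0,1,0,1,0], ![1,0,1,0,0,0], ![0,1,0,1,0,0], ![0,0,0,1,0,0],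
    ![0,0,1,0,1,1], ![0,0,1,0,0,1], ![0,0,1,1,0,0], ![0,0,2,0,0,0]]

def tpost : Fin 8 → Fin 6 → ℕ :=
  ![![0,2,1,0,0,0], ![0,0,0,1,0,0], ![0,0,0,1,1,0], ![0,0,1,0,0,0],
    ![0,0,1,0,0,0], ![0,0,1,1,0,1], ![1,1,2,2,1,1], ![1,1,2,1,1,1]]

lemma forall6 {Q : Fin 6 → Prop} (h0 : Q 0) (h1 : Q 1) (h2 : Q 2) (h3 : Q 3)
    (h4 : Q 4) (h5 : Q 5) : ∀ p, Q p := by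
  intro p
  rcases p with ⟨(_|_|_|_|_|_|n), hp⟩
  · exact h0
  · exact h1
  · exact h2
  · exact h3
  · exact h4
  · exact h5
  · omega

section Generic
variable {P T : Type*} {pre post : T → P → ℕ}

lemma firesSeq_append {M M' M'' : P → ℕ} {u v : List T}
    (h1 : FiresSeq pre post M u M') (h2 : FiresSeq pre post M' v M'') :
    FiresSeq pre post M (u ++ v) M'' := by
  induction u generalizing M with
  | nil => cases h1; exact h2
  | cons t u ih =>
    obtain ⟨N, hf, hs⟩ := h1
    exact ⟨N, hf, ih hs⟩

lemma reach_refl (M : P → ℕ) : Reach pre post M M := ⟨[], rfl⟩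

lemma reach_trans {M M' M'' : P → ℕ} (h1 : Reach pre post M M')
    (h2 : Reach pre post M' M'') : Reach pre post M M'' := by
  obtain ⟨u, hu⟩ := h1; obtain ⟨v, hv⟩ := h2
  exact ⟨u ++ v, firesSeq_append hu hv⟩

lemma reach_fires {M M' : P → ℕ} {t : T} (h : Fires pre post M t M') :
    Reach pre post M M' := ⟨[t], M', h, rfl⟩

lemma reach_cons {M M' M'' : P → ℕ} {t : T} (h : Fires pre post M t M')
    (h2 : Reach pre post M' M'') : Reach pre post M M'' :=
  reach_trans (reach_fires h) h2

end Generic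

end Fig3
namespace Fig3

/- single firing lemmas -/
lemma fires0 (c u v d : ℕ) :
    Fires tpre tpost ![c,u,1,0,v+1,d] 0 ![c,u+2,1,0,v,d] :=
  ⟨forall6 (Nat.zero_le _) (Nat.zero_le _) le_rfl (Nat.zero_le _)
    (Nat.succ_le_succ (Nat.zero_le _)) (Nat.zero_le _),
   forall6 rfl rfl rfl rfl rfl rfl⟩

lemma fires1 (c u v d : ℕ) :
    Fires tpre tpost ![c+1,u,1,0,v,d] 1 ![c,u,0,1,v,d] :=
  ⟨forall6 (Nat.succ_le_succ (Nat.zero_le _)) (Nat.zero_le _) le_rfl (Nat.zero_le _)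
    (Nat.zero_le _) (Nat.zero_le _),
   forall6 rfl rfl rfl rfl rfl rfl⟩

lemma fires2 (c u v d : ℕ) :
    Fires tpre tpost ![c,u+1,0,1,v,d] 2 ![c,u,0,1,v+1,d] :=
  ⟨forall6 (Nat.zero_le _) (Nat.succ_le_succ (Nat.zero_le _)) (Nat.zero_le _) le_rfl
    (Nat.zero_le _) (Nat.zero_le _),
   forall6 rfl rfl rfl rfl rfl rfl⟩

lemma fires3 (c u v d : ℕ) :
    Fires tpre tpost ![c,u,0,1,v,d] 3 ![c,u,1,0,v,d] :=
  ⟨forall6 (Nat.zero_le _) (Nat.zero_le _) (Nat.zero_le _) le_rfl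
    (Nat.zero_le _) (Nat.zero_le _),
   forall6 rfl rfl rfl rfl rfl rfl⟩

lemma fires4 (v d : ℕ) :
    Fires tpre tpost ![0,0,1,0,v+1,d+1] 4 ![0,0,1,0,v,d] :=
  ⟨forall6 (Nat.zero_le _) (Nat.zero_le _) le_rfl (Nat.zero_le _)
    (Nat.succ_le_succ (Nat.zero_le _)) (Nat.succ_le_succ (Nat.zero_le _)),
   forall6 rfl rfl rfl rfl rfl rfl⟩

/- phase A : empty V into U, doubling -/
lemma phaseA (c d : ℕ) : ∀ v u, Reach tpre tpost ![c,u,1,0,v,d] ![c,u+2*v,1,0,0,d] := by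
  intro v
  induction v with
  | zero => intro u; exact reach_refl _
  | succ v ih =>
    intro u
    rw [show u + 2*(v+1) = (u+2) + 2*v by omega]
    exact reach_cons (fires0 c u v d) (ih (u+2))

/- phase B : empty U into V -/
lemma phaseB (c d : ℕ) : ∀ u v, Reach tpre tpost ![c,u,0,1,v,d] ![c,0,0,1,v+u,d] := by
  intro u
  induction u with
  | zero => intro v; exact reach_refl _
  | succ u ih =>
    intro v
    rw [show v + (u+1) = (v+1) + u by omega]
    exact reach_cons (fires2 c u v d) (ih (v+1))

lemma pass (c v d : ℕ) : Reach tpre tpost ![c+1,0,1,0,v,d] ![c,0,1,0,2*v,d] := by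
  have s1 : Reach tpre tpost ![c+1,0,1,0,v,d] ![c+1,2*v,1,0,0,d] := by
    have := phaseA (c+1) d v 0
    rwa [show 0 + 2*v = 2*v by omega] at this
  have s3 : Reach tpre tpost ![c,2*v,0,1,0,d] ![c,0,0,1,2*v,d] := by
    have := phaseB c d (2*v) 0
    rwa [show 0 + 2*v = 2*v by omega] at this
  exact reach_trans s1 (reach_cons (fires1 c (2*v) 0 d)
    (reach_trans s3 (reach_fires (fires3 c 0 (2*v) d))))

lemma doubleAll (d : ℕ) : ∀ c v, Reach tpre tpost ![c,0,1,0,v,d] ![0,0,1,0,2^c*v,d] := by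
  intro c
  induction c with
  | zero => intro v; rw [show (2:ℕ)^0*v = v by simp]; exact reach_refl _
  | succ c ih =>
    intro v
    rw [show (2:ℕ)^(c+1)*v = 2^c*(2*v) by ring]
    exact reach_trans (pass c v d) (ih (2*v))

lemma consume : ∀ n v d, Reach tpre tpost ![0,0,1,0,v+n,d+n] ![0,0,1,0,v,d] := by
  intro n
  induction n with
  | zero => intro v d; exact reach_refl _
  | succ n ih =>
    intro v d
    exact reach_cons (fires4 (v+n) (d+n)) (ih v d)

end Fig3
namespace Fig3

lemma not_enabled_deadlock {M : Fin 6 → ℕ} (h0 : M 0 = 0) (h3 : M 3 = 0)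
    (h4 : M 4 = 0) (h5 : M 5 = 0) (h2 : M 2 ≤ 1) :
    ∀ t, ¬ Enabled tpre M t := by
  intro t ht
  fin_cases t
  · have h : (1:ℕ) ≤ M 4 := ht 4; omega
  · have h : (1:ℕ) ≤ M 0 := ht 0; omega
  · have h : (1:ℕ) ≤ M 3 := ht 3; omega
  · have h : (1:ℕ) ≤ M 3 := ht 3; omega
  · have h : (1:ℕ) ≤ M 4 := ht 4; omega
  · have h : (1:ℕ) ≤ M 5 := ht 5; omega
  · have h : (1:ℕ) ≤ M 3 := ht 3; omega
  · have h : (2:ℕ) ≤ M 2 := ht 2; omega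

lemma reach_eq_of_dead {M M' : Fin 6 → ℕ} (h : ∀ t, ¬ Enabled tpre M t)
    (hr : Reach tpre tpost M M') : M' = M := by
  obtain ⟨u, hu⟩ := hr
  cases u with
  | nil => exact hu
  | cons t u =>
    obtain ⟨N, hf, _⟩ := hu
    exact absurd hf.1 (h t)

/-- the potential function -/
def psi (M : Fin 6 → ℕ) : ℕ :=
  2 ^ M 0 * (M 2 * (2 * M 4 + M 1) + M 3 * (2 * M 4 + 2 * M 1))

/-- the master invariant -/
def Inv (x₁ x₆ : ℕ) (M : Fin 6 → ℕ) : Prop :=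
  1 ≤ M 2 + M 3 ∧ (M 2 + M 3 = 1 → 2 * x₆ + psi M ≤ 2 * M 5 + 2 ^ (x₁+1))

lemma inv_init (x₁ x₆ : ℕ) : Inv x₁ x₆ ![x₁,0,1,0,1,x₆] := by
  constructor
  · show 1 ≤ 1 + 0; omega
  · intro _
    show 2 * x₆ + 2 ^ x₁ * (1 * (2 * 1 + 0) + 0 * (2 * 1 + 2 * 0)) ≤ 2 * x₆ + 2 ^ (x₁+1)
    rw [pow_succ]

lemma inv_step {x₁ x₆ : ℕ} {M M' : Fin 6 → ℕ} (hI : Inv x₁ x₆ M) {t : Fin 8}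
    (h : Fires tpre tpost M t M') : Inv x₁ x₆ M' := by
  obtain ⟨h1, h2⟩ := hI
  fin_cases t
  -- t0 : double V into U
  · have p2 : (1:ℕ) ≤ M 2 := h.1 2
    have p4 : (1:ℕ) ≤ M 4 := h.1 4
    have e0 : M' 0 = M 0 - 0 + 0 := h.2 0
    have e1 : M' 1 = M 1 - 0 + 2 := h.2 1
    have e2 : M' 2 = M 2 - 1 + 1 := h.2 2
    have e3 : M' 3 = M 3 - 0 + 0 := h.2 3
    have e4 : M' 4 = M 4 - 1 + 0 := h.2 4
    have e5 : M' 5 = M 5 - 0 + 0 := h.2 5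
    refine ⟨by omega, ?_⟩
    intro hs
    have hs0 : M 2 + M 3 = 1 := by omega
    have hJ := h2 hs0
    have hpsi : psi M' = psi M := by
      unfold psi
      rw [show M' 0 = M 0 by omega, show M' 1 = M 1 + 2 by omega,
        show M' 2 = M 2 by omega, show M' 3 = M 3 by omega,
        show M' 4 = M 4 - 1 by omega, show M 2 = 1 by omega, show M 3 = 0 by omega]
      congr 1
      omega
    rw [hpsi, show M' 5 = M 5 by omega]
    exact hJ
  -- t1 : switch A→B consuming a counter token
  · have p0 : (1:ℕ) ≤ M 0 := h.1 0
    have p2 : (1:ℕ) ≤ M 2 := h.1 2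
    have e0 : M' 0 = M 0 - 1 + 0 := h.2 0
    have e1 : M' 1 = M 1 - 0 + 0 := h.2 1
    have e2 : M' 2 = M 2 - 1 + 0 := h.2 2
    have e3 : M' 3 = M 3 - 0 + 1 := h.2 3
    have e4 : M' 4 = M 4 - 0 + 0 := h.2 4
    have e5 : M' 5 = M 5 - 0 + 0 := h.2 5
    refine ⟨by omega, ?_⟩
    intro hs
    have hs0 : M 2 + M 3 = 1 := by omega
    have hJ := h2 hs0
    have hp : (2:ℕ)^(M 0) = 2^(M 0 - 1) * 2 := by
      rw [← pow_succ]; congr 1; omega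
    have l1 : psi M' = 2^(M 0 - 1) * (2 * M 4 + 2 * M 1) := by
      unfold psi
      rw [show M' 0 = M 0 - 1 by omega, show M' 1 = M 1 by omega,
        show M' 2 = 0 by omega, show M' 3 = 1 by omega, show M' 4 = M 4 by omega]
      ring
    have l2 : psi M = 2^(M 0 - 1) * (2 * (2 * M 4 + M 1)) := by
      unfold psi
      rw [hp, show M 2 = 1 by omega, show M 3 = 0 by omega]
      ring
    have key : psi M' ≤ psi M := by
      rw [l1, l2]
      exact Nat.mul_le_mul le_rfl (by omega)
    rw [show M' 5 = M 5 by omega]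
    linarith
  -- t2 : move U to V in phase B
  · have p1 : (1:ℕ) ≤ M 1 := h.1 1
    have p3 : (1:ℕ) ≤ M 3 := h.1 3
    have e0 : M' 0 = M 0 - 0 + 0 := h.2 0
    have e1 : M' 1 = M 1 - 1 + 0 := h.2 1
    have e2 : M' 2 = M 2 - 0 + 0 := h.2 2
    have e3 : M' 3 = M 3 - 1 + 1 := h.2 3
    have e4 : M' 4 = M 4 - 0 + 1 := h.2 4
    have e5 : M' 5 = M 5 - 0 + 0 := h.2 5
    refine ⟨by omega, ?_⟩
    intro hs
    have hs0 : M 2 + M 3 = 1 := by omega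
    have hJ := h2 hs0
    have hpsi : psi M' = psi M := by
      unfold psi
      rw [show M' 0 = M 0 by omega, show M' 1 = M 1 - 1 by omega,
        show M' 2 = M 2 by omega, show M' 3 = M 3 by omega,
        show M' 4 = M 4 + 1 by omega, show M 2 = 0 by omega, show M 3 = 1 by omega]
      congr 1
      omega
    rw [hpsi, show M' 5 = M 5 by omega]
    exact hJ
  -- t3 : switch B→A
  · have p3 : (1:ℕ) ≤ M 3 := h.1 3
    have e0 : M' 0 = M 0 - 0 + 0 := h.2 0
    have e1 : M' 1 = M 1 - 0 + 0 := h.2 1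
    have e2 : M' 2 = M 2 - 0 + 1 := h.2 2
    have e3 : M' 3 = M 3 - 1 + 0 := h.2 3
    have e4 : M' 4 = M 4 - 0 + 0 := h.2 4
    have e5 : M' 5 = M 5 - 0 + 0 := h.2 5
    refine ⟨by omega, ?_⟩
    intro hs
    have hs0 : M 2 + M 3 = 1 := by omega
    have hJ := h2 hs0
    have l1 : psi M' = 2^(M 0) * (2 * M 4 + M 1) := by
      unfold psi
      rw [show M' 0 = M 0 by omega, show M' 1 = M 1 by omega,
        show M' 2 = 1 by omega, show M' 3 = 0 by omega, show M' 4 = M 4 by omega]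
      ring
    have l2 : psi M = 2^(M 0) * (2 * M 4 + 2 * M 1) := by
      unfold psi
      rw [show M 2 = 0 by omega, show M 3 = 1 by omega]
      ring
    have key : psi M' ≤ psi M := by
      rw [l1, l2]
      exact Nat.mul_le_mul le_rfl (by omega)
    rw [show M' 5 = M 5 by omega]
    linarith
  -- t4 : consume a pair from V and D
  · have p2 : (1:ℕ) ≤ M 2 := h.1 2
    have p4 : (1:ℕ) ≤ M 4 := h.1 4
    have p5 : (1:ℕ) ≤ M 5 := h.1 5
    have e0 : M' 0 = M 0 - 0 + 0 := h.2 0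
    have e1 : M' 1 = M 1 - 0 + 0 := h.2 1
    have e2 : M' 2 = M 2 - 1 + 1 := h.2 2
    have e3 : M' 3 = M 3 - 0 + 0 := h.2 3
    have e4 : M' 4 = M 4 - 1 + 0 := h.2 4
    have e5 : M' 5 = M 5 - 1 + 0 := h.2 5
    refine ⟨by omega, ?_⟩
    intro hs
    have hs0 : M 2 + M 3 = 1 := by omega
    have hJ := h2 hs0
    have l1 : psi M' = 2^(M 0) * (2 * (M 4 - 1) + M 1) := by
      unfold psi
      rw [show M' 0 = M 0 by omega, show M' 1 = M 1 by omega,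
        show M' 2 = 1 by omega, show M' 3 = 0 by omega, show M' 4 = M 4 - 1 by omega]
      ring
    have l2 : psi M = 2^(M 0) * (2 * M 4 + M 1) := by
      unfold psi
      rw [show M 2 = 1 by omega, show M 3 = 0 by omega]
      ring
    have key : psi M' + 2^(M 0) * 2 = psi M := by
      rw [l1, l2, ← Nat.mul_add]
      congr 1
      omega
    have hone : 1 ≤ 2^(M 0) := Nat.one_le_two_pow
    rw [show M' 5 = M 5 - 1 by omega]
    have hm5 : 2 * (M 5 - 1) + 2 = 2 * M 5 := by omega
    linarith
  -- t5 : raise the flag (A,D present)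
  · have p2 : (1:ℕ) ≤ M 2 := h.1 2
    have e2 : M' 2 = M 2 - 1 + 1 := h.2 2
    have e3 : M' 3 = M 3 - 0 + 1 := h.2 3
    refine ⟨by omega, ?_⟩
    intro hs
    exfalso
    omega
  -- t6 : pump (A,B present)
  · have p2 : (1:ℕ) ≤ M 2 := h.1 2
    have p3 : (1:ℕ) ≤ M 3 := h.1 3
    have e2 : M' 2 = M 2 - 1 + 2 := h.2 2
    have e3 : M' 3 = M 3 - 1 + 2 := h.2 3
    refine ⟨by omega, ?_⟩
    intro hs
    exfalso
    omega
  -- t7 : pump (A ≥ 2)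
  · have p2 : (2:ℕ) ≤ M 2 := h.1 2
    have e2 : M' 2 = M 2 - 2 + 2 := h.2 2
    have e3 : M' 3 = M 3 - 0 + 1 := h.2 3
    refine ⟨by omega, ?_⟩
    intro hs
    exfalso
    omega

lemma inv_reach {x₁ x₆ : ℕ} {M M' : Fin 6 → ℕ} (h0 : Inv x₁ x₆ M)
    (hr : Reach tpre tpost M M') : Inv x₁ x₆ M' := by
  obtain ⟨u, hu⟩ := hr
  induction u generalizing M with
  | nil => exact hu ▸ h0
  | cons t u ih =>
    obtain ⟨N, hf, hs⟩ := hu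
    exact ih (inv_step h0 hf) hs

end Fig3
namespace Fig3

lemma tpre_le_two : ∀ (t : Fin 8) (p : Fin 6), tpre t p ≤ 2 := by decide

lemma fires_mk (t : Fin 8) (M : Fin 6 → ℕ) (h : Enabled tpre M t) :
    Fires tpre tpost M t (fun p => M p - tpre t p + tpost t p) := ⟨h, fun _ => rfl⟩

/-- firing t6 adds one token everywhere -/
lemma fires_pump {M : Fin 6 → ℕ} (h2 : 1 ≤ M 2) (h3 : 1 ≤ M 3) :
    Fires tpre tpost M 6 (fun p => M p + 1) := by
  constructor
  · exact forall6 (Nat.zero_le _) (Nat.zero_le _) h2 h3 (Nat.zero_le _) (Nat.zero_le _)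
  · exact forall6 (show M 0 + 1 = M 0 - 0 + 1 by omega) (show M 1 + 1 = M 1 - 0 + 1 by omega)
      (show M 2 + 1 = M 2 - 1 + 2 by omega) (show M 3 + 1 = M 3 - 1 + 2 by omega)
      (show M 4 + 1 = M 4 - 0 + 1 by omega) (show M 5 + 1 = M 5 - 0 + 1 by omega)

lemma pump : ∀ (n : ℕ) (M : Fin 6 → ℕ), 1 ≤ M 2 → 1 ≤ M 3 →
    Reach tpre tpost M (fun p => M p + n) := by
  intro n
  induction n with
  | zero => intro M _ _; exact reach_refl _
  | succ n ih =>
    intro M h2 h3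
    have step := fires_pump h2 h3
    have rest := ih (fun p => M p + 1) (by show 1 ≤ M 2 + 1; omega) (by show 1 ≤ M 3 + 1; omega)
    have : (fun p => (fun q => M q + 1) p + n) = (fun p => M p + (n+1)) := by
      funext p; show M p + 1 + n = M p + (n+1); omega
    rw [this] at rest
    exact reach_cons step rest

lemma exists_reach_enabled {M : Fin 6 → ℕ} (h2 : 1 ≤ M 2) (h3 : 1 ≤ M 3) (t : Fin 8) :
    ∃ N, Reach tpre tpost M N ∧ Enabled tpre N t :=
  ⟨fun p => M p + 2, pump 2 M h2 h3,
    fun p => le_trans (tpre_le_two t p) (Nat.le_add_left 2 (M p))⟩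

/-- from any marking with a control token plus either flag or input, reach a marking
with both control places marked -/
lemma reach_both {M : Fin 6 → ℕ}
    (h : 2 ≤ M 2 + M 3 ∨ (1 ≤ M 2 + M 3 ∧ 1 ≤ M 5)) :
    ∃ N, Reach tpre tpost M N ∧ 1 ≤ N 2 ∧ 1 ≤ N 3 := by
  by_cases h2 : 1 ≤ M 2
  · by_cases h3 : 1 ≤ M 3
    · exact ⟨M, reach_refl _, h2, h3⟩
    · -- M 3 = 0
      by_cases h22 : 2 ≤ M 2
      · -- fire t7
        refine ⟨_, reach_fires (fires_mk 7 M (forall6 (Nat.zero_le _) (Nat.zero_le _)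
          h22 (Nat.zero_le _) (Nat.zero_le _) (Nat.zero_le _))), ?_, ?_⟩
        · show 1 ≤ M 2 - 2 + 2; omega
        · show 1 ≤ M 3 - 0 + 1; omega
      · -- M 2 = 1, M 3 = 0 : sum = 1, so M 5 ≥ 1 ; fire t5
        have h5 : 1 ≤ M 5 := by
          rcases h with h | h
          · omega
          · exact h.2
        refine ⟨_, reach_fires (fires_mk 5 M (forall6 (Nat.zero_le _) (Nat.zero_le _)
          h2 (Nat.zero_le _) (Nat.zero_le _) h5)), ?_, ?_⟩
        · show 1 ≤ M 2 - 1 + 1; omega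
        · show 1 ≤ M 3 - 0 + 1; omega
  · -- M 2 = 0, so M 3 ≥ 1 ; fire t3 first
    have h3 : 1 ≤ M 3 := by omega
    have hf3 := fires_mk 3 M (forall6 (Nat.zero_le _) (Nat.zero_le _) (Nat.zero_le _)
      h3 (Nat.zero_le _) (Nat.zero_le _))
    set N1 : Fin 6 → ℕ := fun p => M p - tpre 3 p + tpost 3 p with hN1
    have hN12 : 1 ≤ N1 2 := by show 1 ≤ M 2 - 0 + 1; omega
    by_cases h32 : 2 ≤ M 3
    · exact ⟨N1, reach_fires hf3, hN12, by show 1 ≤ M 3 - 1 + 0; omega⟩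
    · -- M 3 = 1, sum = 1, so M 5 ≥ 1 ; after t3 fire t5
      have h5 : 1 ≤ M 5 := by
        rcases h with h | h
        · omega
        · exact h.2
      have hN15 : 1 ≤ N1 5 := by show 1 ≤ M 5 - 0 + 0; omega
      have hf5 := fires_mk 5 N1 (forall6 (Nat.zero_le _) (Nat.zero_le _) hN12
        (Nat.zero_le _) (Nat.zero_le _) hN15)
      refine ⟨_, reach_cons hf3 (reach_fires hf5), ?_, ?_⟩
      · show 1 ≤ N1 2 - 1 + 1; omega
      · show 1 ≤ N1 3 - 0 + 1; omega

end Fig3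
namespace Fig3

lemma key_dead (x₁ x₆ : ℕ) :
    (∃ M' : Fin 6 → ℕ, Reach tpre tpost ![x₁, 0, 1, 0, 1, x₆] M' ∧
      ∀ t, Dead tpre tpost M' t) ↔ x₆ ≤ 2 ^ x₁ := by
  constructor
  · rintro ⟨M', hr, hd⟩
    -- M' is a total deadlock
    have hne : ∀ t, ¬ Enabled tpre M' t := fun t => hd t M' (reach_refl _)
    have hInv := inv_reach (inv_init x₁ x₆) hr
    have c3 : M' 3 = 0 := by
      by_contra hc
      exact hne 3 (forall6 (Nat.zero_le _) (Nat.zero_le _) (Nat.zero_le _)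
        (show (1:ℕ) ≤ M' 3 by omega) (Nat.zero_le _) (Nat.zero_le _))
    have c2 : M' 2 ≤ 1 := by
      by_contra hc
      exact hne 7 (forall6 (Nat.zero_le _) (Nat.zero_le _) (show (2:ℕ) ≤ M' 2 by omega)
        (Nat.zero_le _) (Nat.zero_le _) (Nat.zero_le _))
    have hs1 : M' 2 = 1 := by have := hInv.1; omega
    have c0 : M' 0 = 0 := by
      by_contra hc
      exact hne 1 (forall6 (show (1:ℕ) ≤ M' 0 by omega) (Nat.zero_le _)
        (show (1:ℕ) ≤ M' 2 by omega) (Nat.zero_le _) (Nat.zero_le _) (Nat.zero_le _))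
    have c4 : M' 4 = 0 := by
      by_contra hc
      exact hne 0 (forall6 (Nat.zero_le _) (Nat.zero_le _) (show (1:ℕ) ≤ M' 2 by omega)
        (Nat.zero_le _) (show (1:ℕ) ≤ M' 4 by omega) (Nat.zero_le _))
    have c5 : M' 5 = 0 := by
      by_contra hc
      exact hne 5 (forall6 (Nat.zero_le _) (Nat.zero_le _) (show (1:ℕ) ≤ M' 2 by omega)
        (Nat.zero_le _) (Nat.zero_le _) (show (1:ℕ) ≤ M' 5 by omega))
    have hJ := hInv.2 (by omega)
    have hpsi : psi M' = M' 1 := by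
      unfold psi
      rw [c0, hs1, c3, c4]
      ring
    have hp : (2:ℕ)^(x₁+1) = 2 * 2^x₁ := by rw [pow_succ]; ring
    omega
  · intro h
    -- run the doubler, consume all of D, dump V
    have s1 := doubleAll x₆ x₁ 1
    rw [show (2:ℕ)^x₁*1 = (2^x₁ - x₆) + x₆ by rw [Nat.mul_one]; omega] at s1
    have s2 := consume x₆ (2^x₁ - x₆) 0
    rw [show (0:ℕ) + x₆ = x₆ by omega] at s2
    have s3 := phaseA 0 0 (2^x₁ - x₆) 0
    rw [show (0:ℕ) + 2*(2^x₁ - x₆) = 2*(2^x₁ - x₆) by omega] at s3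
    have hreach : Reach tpre tpost ![x₁,0,1,0,1,x₆] ![0,2*(2^x₁-x₆),1,0,0,0] :=
      reach_trans s1 (reach_trans s2 s3)
    have hdl : ∀ t, ¬ Enabled tpre (![0,2*(2^x₁-x₆),1,0,0,0] : Fin 6 → ℕ) t :=
      not_enabled_deadlock rfl rfl rfl rfl le_rfl
    refine ⟨_, hreach, fun t M'' hr hen => hdl t ?_⟩
    rw [reach_eq_of_dead hdl hr] at hen
    exact hen

lemma key_live (x₁ x₆ : ℕ) :
    (∀ t, Live tpre tpost ![x₁, 0, 1, 0, 1, x₆] t) ↔ 2 ^ x₁ < x₆ := by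
  constructor
  · intro hlive
    by_contra hx
    obtain ⟨M', hr, hd⟩ := (key_dead x₁ x₆).mpr (by omega)
    exact hlive 0 M' hr (hd 0)
  · intro hx t M' hr hdead
    have hInv := inv_reach (inv_init x₁ x₆) hr
    have hcase : 2 ≤ M' 2 + M' 3 ∨ (1 ≤ M' 2 + M' 3 ∧ 1 ≤ M' 5) := by
      by_cases hs : 2 ≤ M' 2 + M' 3
      · exact Or.inl hs
      · right
        refine ⟨hInv.1, ?_⟩
        have hJ := hInv.2 (by have := hInv.1; omega)
        have hp : (2:ℕ)^(x₁+1) = 2 * 2^x₁ := by rw [pow_succ]; ring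
        omega
    obtain ⟨N, hrN, hN2, hN3⟩ := reach_both hcase
    obtain ⟨N2, hrN2, hen⟩ := exists_reach_enabled hN2 hN3 t
    exact hdead N2 (reach_trans hrN hrN2) hen

end Fig3
namespace Fig3

/-- exponentials dominate linear functions -/
lemma exp_dom (A B : ℕ) : ∃ t, A * t + B < 2 ^ t := by
  refine ⟨3*(A+B+1), ?_⟩
  have h1 : A+B+2 ≤ 2^(A+B+1) := Nat.lt_two_pow_self (n := A+B+1)
  calc A*(3*(A+B+1)) + B < (A+B+2)^3 := by nlinarith [sq_nonneg (A+B+1)]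
    _ ≤ (2^(A+B+1))^3 := Nat.pow_le_pow_left h1 3
    _ = 2^(3*(A+B+1)) := by rw [← pow_mul, mul_comm]

end Fig3

/-- For the weak-doubling net of Fig. 3 (with places `p1,…,p6` and some finite set of
transitions): from `(x₁,0,1,0,1,x₆)` a totally dead marking is reachable iff `x₆ ≤ 2^{x₁}`;
the marking `(x₁,0,1,0,1,x₆)` is live iff `x₆ > 2^{x₁}`; hence the set of live markings
of this net is not semilinear. -/
theorem fig3_live_set_not_semilinear :
    ∃ (k : ℕ) (pre post : Fin k → Fin 6 → ℕ),
      (∀ x₁ x₆ : ℕ,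
        (∃ M' : Fin 6 → ℕ, Reach pre post ![x₁, 0, 1, 0, 1, x₆] M' ∧
          ∀ t, Dead pre post M' t) ↔ x₆ ≤ 2 ^ x₁) ∧
      (∀ x₁ x₆ : ℕ,
        (∀ t, Live pre post ![x₁, 0, 1, 0, 1, x₆] t) ↔ 2 ^ x₁ < x₆) ∧
      ¬ IsSemilinearSet' {M : Fin 6 → ℕ | ∀ t, Live pre post M t} := by
  refine ⟨8, Fig3.tpre, Fig3.tpost, Fig3.key_dead, Fig3.key_live, ?_⟩
  rintro ⟨m, L, hLin, hU⟩
  set v : ℕ → (Fin 6 → ℕ) := fun n => ![n,0,1,0,1,2^n+1] with hv_def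
  have hv : ∀ n, v n ∈ ⋃ i, L i := by
    intro n
    rw [← hU]
    exact (Fig3.key_live n (2^n+1)).mpr (by omega)
  -- one linear component contains infinitely many of the v n
  have hex : ∃ i, {n | v n ∈ L i}.Infinite := by
    by_contra hc
    push_neg at hc
    have hfin : (Set.univ : Set ℕ).Finite := by
      refine Set.Finite.subset (Set.finite_iUnion
        (fun i => hc i)) ?_
      intro n _
      have := hv n
      rw [Set.mem_iUnion] at this
      obtain ⟨i, hi⟩ := this
      exact Set.mem_iUnion.2 ⟨i, hi⟩
    exact Set.infinite_univ hfin
  obtain ⟨i, hInf⟩ := hex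
  obtain ⟨ρ, k, π, hL⟩ := hLin i
  set p : ℕ → Prop := fun n => v n ∈ L i with hp_def
  have hInf' : (setOf p).Infinite := hInf
  have hpm : ∀ j, v (Nat.nth p j) ∈ L i := fun j => Nat.nth_mem_of_infinite hInf' j
  have hcoef : ∀ j, ∃ x : Fin k → ℕ, v (Nat.nth p j) = ρ + ∑ i', x i' • π i' := by
    intro j
    have := hpm j
    rw [hL] at this
    exact this
  choose c hc using hcoef
  -- Dickson's lemma
  obtain ⟨j1, j2, hj, hle⟩ := (wellQuasiOrdered_le (α := Fin k → ℕ)) c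
  set a : ℕ := Nat.nth p j1 with ha_def
  set a' : ℕ := Nat.nth p j2 with ha'_def
  have haa : a < a' := (Nat.nth_lt_nth hInf').2 hj
  set D : Fin 6 → ℕ := ∑ i', (c j2 i' - c j1 i') • π i' with hD_def
  have hsum2 : (∑ i', c j2 i' • π i') = (∑ i', c j1 i' • π i') + D := by
    rw [hD_def, ← Finset.sum_add_distrib]
    refine Finset.sum_congr rfl ?_
    intro i' _
    rw [← add_smul]
    congr 1
    have h' : c j1 i' ≤ c j2 i' := hle i'
    omega
  have hva' : v a' = v a + D := by
    rw [hc j2, hc j1, hsum2, add_assoc]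
  -- pumped points stay in L i
  have hw : ∀ t : ℕ, v a + t • D ∈ L i := by
    intro t
    rw [hL]
    refine ⟨fun i' => c j1 i' + t * (c j2 i' - c j1 i'), ?_⟩
    have expand : (∑ i', (c j1 i' + t * (c j2 i' - c j1 i')) • π i')
        = (∑ i', c j1 i' • π i') + t • D := by
      rw [hD_def, Finset.smul_sum, ← Finset.sum_add_distrib]
      refine Finset.sum_congr rfl ?_
      intro i' _
      rw [← mul_smul, ← add_smul]
    rw [expand, hc j1, add_assoc]
  -- coordinates of D
  have hD0 : a' = a + D 0 := congrFun hva' 0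
  have hD1 : (0:ℕ) = 0 + D 1 := congrFun hva' 1
  have hD2 : (1:ℕ) = 1 + D 2 := congrFun hva' 2
  have hD3 : (0:ℕ) = 0 + D 3 := congrFun hva' 3
  have hD4 : (1:ℕ) = 1 + D 4 := congrFun hva' 4
  have hD5 : 2^a' + 1 = (2^a + 1) + D 5 := congrFun hva' 5
  have hδ : 1 ≤ D 0 := by omega
  -- pumped points as explicit vectors
  have hweq : ∀ t : ℕ, v a + t • D = ![a + t * D 0, 0, 1, 0, 1, (2^a + 1) + t * D 5] := by
    intro t
    funext q
    refine Fig3.forall6 (Q := fun q => (v a + t • D) q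
      = (![a + t * D 0, 0, 1, 0, 1, (2^a + 1) + t * D 5] : Fin 6 → ℕ) q)
      ?_ ?_ ?_ ?_ ?_ ?_ q
    · rfl
    · show 0 + t * D 1 = 0
      rw [show D 1 = 0 by omega]; ring
    · show 1 + t * D 2 = 1
      rw [show D 2 = 0 by omega]; ring
    · show 0 + t * D 3 = 0
      rw [show D 3 = 0 by omega]; ring
    · show 1 + t * D 4 = 1
      rw [show D 4 = 0 by omega]; ring
    · rfl
  -- all pumped points are live, i.e. 2^(a + t*D0) < 2^a + 1 + t*D5 for all t
  have hlive : ∀ t : ℕ, 2 ^ (a + t * D 0) < (2^a + 1) + t * D 5 := by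
    intro t
    have hmem : v a + t • D ∈ {M : Fin 6 → ℕ | ∀ t', Live Fig3.tpre Fig3.tpost M t'} := by
      rw [hU]
      exact Set.mem_iUnion.2 ⟨i, hw t⟩
    have := (Fig3.key_live (a + t * D 0) ((2^a + 1) + t * D 5)).mp
      (by rw [← hweq t]; exact hmem)
    exact this
  obtain ⟨t, ht⟩ := Fig3.exp_dom (D 5) (2^a + 1)
  have h2 : (2:ℕ)^t ≤ 2^(a + t * D 0) := by
    refine Nat.pow_le_pow_right (by omega) ?_
    have := Nat.mul_le_mul_left t hδ
    omega
  have h3 := hlive t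
  have hcomm : D 5 * t = t * D 5 := mul_comm _ _
  linarith
end

section
/- The set {(x,y) ∈ ℕ² : y > 2^x} is not semilinear. -/
/-- A linear subset of `ℕ^d`. -/
def IsLinearSetNd {d : ℕ} (L : Set (Fin d → ℕ)) : Prop :=
  ∃ (ρ : Fin d → ℕ) (k : ℕ) (π : Fin k → (Fin d → ℕ)),
    L = {v | ∃ x : Fin k → ℕ, v = ρ + ∑ i, x i • π i}

/-- A semilinear subset of `ℕ^d`: a finite union of linear sets. -/
def IsSemilinearSetNd {d : ℕ} (S : Set (Fin d → ℕ)) : Prop :=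
  ∃ (m : ℕ) (L : Fin m → Set (Fin d → ℕ)), (∀ i, IsLinearSetNd (L i)) ∧ S = ⋃ i, L i

lemma exists_pow_gt (a b : ℕ) : ∃ n, a + n * b < 2 ^ n := by
  refine ⟨2 * (a + b) + 3, ?_⟩
  set s := a + b with hs
  have h1 : s < 2 ^ s := Nat.lt_two_pow_self (n := s)
  have h2 : 2 ^ (2 * s + 3) = 8 * (2 ^ s * 2 ^ s) := by
    rw [pow_add, two_mul, pow_add]; ring
  have hb : b ≤ s := by omega
  have ha : a ≤ s := by omega
  calc a + (2 * s + 3) * b ≤ s + (2 * s + 3) * s := by nlinarith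
    _ < 8 * (2 ^ s * 2 ^ s) := by nlinarith
    _ = 2 ^ (2 * s + 3) := h2.symm

/-- The set `{(x,y) ∈ ℕ² : y > 2^x}` is not semilinear. -/
theorem exp_set_not_semilinear :
    ¬ IsSemilinearSetNd {v : Fin 2 → ℕ | 2 ^ v 0 < v 1} := by
  rintro ⟨m, L, hL, hS⟩
  have hchoice : ∀ x : ℕ, ∃ i, (![x, 2 ^ x + 1] : Fin 2 → ℕ) ∈ L i := by
    intro x
    have hx : (![x, 2 ^ x + 1] : Fin 2 → ℕ) ∈ {v : Fin 2 → ℕ | 2 ^ v 0 < v 1} := by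
      simp [Set.mem_setOf_eq]
    rw [hS] at hx
    simpa using hx
  choose f hf using hchoice
  obtain ⟨i0, hi0⟩ := Finite.exists_infinite_fiber f
  have hinf : (f ⁻¹' {i0} : Set ℕ).Infinite := Set.infinite_coe_iff.mp hi0
  obtain ⟨ρ, k, π, hLi⟩ := hL i0
  obtain ⟨x1, hx1mem, hx1⟩ := hinf.exists_gt (ρ 0)
  have hx1L : (![x1, 2 ^ x1 + 1] : Fin 2 → ℕ) ∈ L i0 := by
    have hfx : f x1 = i0 := hx1mem
    simpa [hfx] using hf x1
  rw [hLi] at hx1L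
  obtain ⟨c, hc⟩ := hx1L
  have h0 : x1 = ρ 0 + ∑ i, c i * π i 0 := by
    have := congrFun hc 0
    simpa [Finset.sum_apply] using this
  have h1 : 2 ^ x1 + 1 = ρ 1 + ∑ i, c i * π i 1 := by
    have := congrFun hc 1
    simpa [Finset.sum_apply] using this
  -- there must be a period with positive first coordinate
  have hj : ∃ j, 0 < π j 0 := by
    by_contra h
    push_neg at h
    have hz : ∀ i, π i 0 = 0 := fun i => Nat.le_zero.mp (h i)
    have : (∑ i, c i * π i 0) = 0 := Finset.sum_eq_zero (fun i _ => by rw [hz i, mul_zero])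
    omega
  obtain ⟨j, hj⟩ := hj
  -- for every n, the shifted point is in the set
  have key : ∀ n : ℕ, 2 ^ (x1 + n * π j 0) < 2 ^ x1 + 1 + n * π j 1 := by
    intro n
    set c' : Fin k → ℕ := fun i => c i + if i = j then n else 0 with hc'
    have hwL : (ρ + ∑ i, c' i • π i) ∈ L i0 := by
      rw [hLi]; exact ⟨c', rfl⟩
    have hwS : (ρ + ∑ i, c' i • π i) ∈ {v : Fin 2 → ℕ | 2 ^ v 0 < v 1} := by
      rw [hS]; exact Set.mem_iUnion.mpr ⟨i0, hwL⟩
    have hcoord : ∀ t : Fin 2, (ρ + ∑ i, c' i • π i) t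
        = ρ t + ∑ i, c i * π i t + n * π j t := by
      intro t
      have : (∑ i, c' i • π i) t = ∑ i, c' i * π i t := by
        simp [Finset.sum_apply]
      rw [Pi.add_apply, this]; simp only [hc']
      rw [show (∑ i, (c i + if i = j then n else 0) * π i t)
          = ∑ i, (c i * π i t + if i = j then n * π i t else 0) by
        apply Finset.sum_congr rfl; intro i _; split <;> simp [add_mul]]
      rw [Finset.sum_add_distrib, Finset.sum_ite_eq' Finset.univ j (fun i => n * π i t)]
      simp [add_assoc]
    have hineq := hwS
    simp only [Set.mem_setOf_eq] at hineq
    rw [hcoord 0, hcoord 1, ← h0, ← h1] at hineq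
    exact hineq
  obtain ⟨n, hn⟩ := exists_pow_gt (2 ^ x1 + 1) (π j 1)
  have hge : 2 ^ n ≤ 2 ^ (x1 + n * π j 0) := by
    apply Nat.pow_le_pow_right (by norm_num)
    have : n ≤ n * π j 0 := Nat.le_mul_of_pos_right n hj
    omega
  have := key n
  omega
end
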